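/- Suppose ν(U) > 0 for every nonempty relatively open subset U ⊆ X, and that f_∞ ∈ L^∞(X,ν) with M := ‖f_∞‖_{L^∞(X,ν)} > 0 satisfies sup_X |f_k − f_∞| → 0 as k → ∞. Then for every ε ∈ (0, M) there exists k(ε) ∈ ℕ such that for all k ≥ k(ε) the density of the concentration measure ν_k satisfies the pointwise bound |dν_k/dν (x)| ≤ (1/ν(X)) · ( (2 |f_∞|^★(x) + ε) / (2M − ε) )^{k−1} for ν-almost every x ∈ X, where |f_∞|^★ is the ν-essential limsup of |f_∞|. -/

import Mathlib

open MeasureTheory Filter Metric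
open scoped ENNReal Topology

noncomputable section

/-- `n`-dimensional Euclidean space. -/
abbrev Euc (n : ℕ) := EuclideanSpace ℝ (Fin n)

/-- The `k`-regularisation `|a|_{(k)} = √(a² + k⁻²)` of the absolute value. -/
def regAbs (k : ℕ) (a : ℝ) : ℝ := Real.sqrt (a ^ 2 + ((k : ℝ)⁻¹) ^ 2)

/-- The normalised `L^k` norm `‖g‖_{L^k(X,ν)} = ((1/ν(X)) ∫_X |g|^k dν)^(1/k)`. -/
def nLkNorm {n : ℕ} (k : ℕ) (ν : Measure (Euc n)) (X : Set (Euc n)) (g : Euc n → ℝ) : ℝ :=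
  ((ν X).toReal⁻¹ * ∫ x in X, |g x| ^ (k : ℝ) ∂ν) ^ ((k : ℝ)⁻¹)

/-- The `L^∞(X,ν)` norm: the `ν`-essential supremum of `|g|` on `X`. -/
def nLinfNorm {n : ℕ} (ν : Measure (Euc n)) (X : Set (Euc n)) (g : Euc n → ℝ) : ℝ :=
  essSup (fun x => |g x|) (ν.restrict X)

/-- The density `(1/ν(X)) (|f|_{(k)})^{k−2} f / ‖|f|_{(k)}‖^{k−1}_{L^k(X,ν)}`
of the `k`-th concentration measure with respect to `ν`. -/
def concDensity {n : ℕ} (k : ℕ) (ν : Measure (Euc n)) (X : Set (Euc n))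
    (f : Euc n → ℝ) : Euc n → ℝ :=
  fun x => (ν X).toReal⁻¹ *
    (regAbs k (f x) ^ ((k : ℝ) - 2) * f x /
      nLkNorm k ν X (fun y => regAbs k (f y)) ^ ((k : ℝ) - 1))

/-- The `ν`-essential limsup of `f` on `X` at `x`:
`f^★(x) = inf_{ε>0} (ν-ess sup_{y ∈ B_ε(x)} f(y))`, where `B_ε(x) = X ∩ {y : |y − x| < ε}`. -/
def essLimSup {n : ℕ} (ν : Measure (Euc n)) (X : Set (Euc n)) (f : Euc n → ℝ)
    (x : Euc n) : ℝ :=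
  ⨅ ε : Set.Ioi (0 : ℝ), essSup f (ν.restrict (X ∩ Metric.ball x (ε : ℝ)))

/- ### auxiliary lemmas -/

lemma regAbs_nonneg (k : ℕ) (a : ℝ) : 0 ≤ regAbs k a := Real.sqrt_nonneg _

lemma abs_le_regAbs (k : ℕ) (a : ℝ) : |a| ≤ regAbs k a := by
  rw [regAbs, show |a| = Real.sqrt (a ^ 2) by rw [Real.sqrt_sq_eq_abs]]
  exact Real.sqrt_le_sqrt (le_add_of_nonneg_right (by positivity))

lemma regAbs_pos {k : ℕ} (hk : k ≠ 0) (a : ℝ) : 0 < regAbs k a := by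
  apply Real.sqrt_pos.2
  have : (0:ℝ) < ((k:ℝ)⁻¹) ^ 2 := by
    have : (0:ℝ) < (k:ℝ) := by exact_mod_cast Nat.pos_of_ne_zero hk
    positivity
  positivity

lemma regAbs_le (k : ℕ) (a : ℝ) : regAbs k a ≤ |a| + (k : ℝ)⁻¹ := by
  rw [regAbs]
  have h1 : (0:ℝ) ≤ (k:ℝ)⁻¹ := by positivity
  have : a ^ 2 + ((k:ℝ)⁻¹) ^ 2 ≤ (|a| + (k:ℝ)⁻¹) ^ 2 := by
    have : (0:ℝ) ≤ |a| := abs_nonneg a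
    nlinarith [abs_nonneg a, sq_abs a]
  calc Real.sqrt (a ^ 2 + ((k:ℝ)⁻¹) ^ 2) ≤ Real.sqrt ((|a| + (k:ℝ)⁻¹) ^ 2) :=
        Real.sqrt_le_sqrt this
    _ = |a| + (k:ℝ)⁻¹ := by
        rw [Real.sqrt_sq (by positivity)]

lemma ae_abs_le_of_memLinf {α : Type*} [MeasurableSpace α] {μ : Measure α} {g : α → ℝ}
    (hg : MemLp g ⊤ μ) : ∀ᵐ x ∂μ, |g x| ≤ (eLpNorm g ⊤ μ).toReal := by
  have h := ae_le_eLpNormEssSup (f := g) (μ := μ)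
  have hne : eLpNorm g ⊤ μ ≠ ⊤ := hg.2.ne
  rw [eLpNorm_exponent_top] at hne
  filter_upwards [h] with x hx
  have h2 : ((‖g x‖₊ : ℝ≥0∞)).toReal ≤ (eLpNormEssSup g μ).toReal :=
    ENNReal.toReal_mono hne hx
  simpa [Real.norm_eq_abs, eLpNorm_exponent_top] using h2

lemma ae_le_essSup_real {α : Type*} [MeasurableSpace α] {μ : Measure α} {g : α → ℝ} {C : ℝ}
    (hC : ∀ᵐ x ∂μ, g x ≤ C) : ∀ᵐ x ∂μ, g x ≤ essSup g μ :=
  eventually_le_limsup ⟨C, eventually_map.2 hC⟩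

lemma essSup_real_le_of_ae_le {α : Type*} [MeasurableSpace α] {μ : Measure α} [NeBot (ae μ)]
    {g : α → ℝ} {C : ℝ} (h0 : ∀ x, 0 ≤ g x) (hC : ∀ᵐ x ∂μ, g x ≤ C) : essSup g μ ≤ C := by
  show limsup g (ae μ) ≤ C
  refine limsup_le_of_le ?_ hC
  have hb : IsBoundedUnder (· ≥ ·) (ae μ) g :=
    Filter.isBoundedUnder_of ⟨0, fun x => h0 x⟩
  exact hb.isCoboundedUnder_le

lemma essSup_real_mono_measure {α : Type*} [MeasurableSpace α] {μ μ' : Measure α}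
    {g : α → ℝ} (h : μ ≤ μ') (hne : μ ≠ 0) (h0 : ∀ x, 0 ≤ g x) {C : ℝ}
    (hC : ∀ᵐ x ∂μ', g x ≤ C) : essSup g μ ≤ essSup g μ' := by
  haveI : NeBot (ae μ) := ae_neBot.2 hne
  have hb : IsBoundedUnder (· ≥ ·) (ae μ) g :=
    Filter.isBoundedUnder_of ⟨0, fun x => h0 x⟩
  exact limsup_le_limsup_of_le (ae_mono h) hb.isCoboundedUnder_le ⟨C, eventually_map.2 hC⟩

lemma restrict_ne_zero' {α : Type*} [MeasurableSpace α] {μ : Measure α} {s : Set α}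
    (h : 0 < μ s) : μ.restrict s ≠ 0 := by
  intro hcon
  have h2 : μ.restrict s Set.univ = μ s := Measure.restrict_apply_univ _
  rw [hcon] at h2
  simp only [Measure.coe_zero, Pi.zero_apply] at h2
  rw [← h2] at h
  exact lt_irrefl _ h

lemma ae_le_essLimSup {n : ℕ} (X : Set (Euc n)) (hXm : MeasurableSet X)
    (ν : Measure (Euc n)) [IsFiniteMeasure ν]
    (hνpos : ∀ V : Set (Euc n), IsOpen V → (X ∩ V).Nonempty → 0 < ν (X ∩ V))
    (finf : Euc n → ℝ) (C : ℝ) (hC : ∀ᵐ x ∂ν, |finf x| ≤ C) :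
    ∀ᵐ x ∂ν, x ∈ X → |finf x| ≤ essLimSup ν X (fun y => |finf y|) x := by
  obtain ⟨D, hDc, hDd⟩ := TopologicalSpace.exists_countable_dense (Euc n)
  have key : ∀ (r : ℝ), 0 < r → ∀ d : Euc n, ∀ᵐ y ∂ν,
      y ∈ X ∩ ball d (r/2) →
      |finf y| ≤ essSup (fun z => |finf z|) (ν.restrict (X ∩ ball y r)) := by
    intro r hr d
    set S := X ∩ ball d (r/2) with hS
    have hSm : MeasurableSet S := hXm.inter measurableSet_ball
    by_cases h0 : ν S = 0
    · filter_upwards [measure_eq_zero_iff_ae_notMem.1 h0] with y hy hyS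
      exact absurd hyS hy
    · have hne : ν.restrict S ≠ 0 := by
        intro hcon
        apply h0
        have h2 := congrArg (fun m : Measure (Euc n) => m Set.univ) hcon
        simpa [Measure.restrict_apply_univ] using h2
      have h1 : ∀ᵐ y ∂ν.restrict S, |finf y| ≤ essSup (fun z => |finf z|) (ν.restrict S) :=
        ae_le_essSup_real (μ := ν.restrict S) (ae_restrict_of_ae hC)
      rw [ae_restrict_iff' hSm] at h1
      filter_upwards [h1] with y hy hyS
      refine (hy hyS).trans ?_
      refine essSup_real_mono_measure ?_ hne (fun z => abs_nonneg _) (ae_restrict_of_ae hC)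
      refine Measure.restrict_mono ?_ le_rfl
      rintro z ⟨hzX, hzb⟩
      refine ⟨hzX, mem_ball.2 ?_⟩
      have h1 : dist z d < r/2 := mem_ball.1 hzb
      have h2 : dist y d < r/2 := mem_ball.1 hyS.2
      calc dist z y ≤ dist z d + dist d y := dist_triangle _ _ _
        _ < r/2 + r/2 := by rw [dist_comm d y]; exact add_lt_add h1 (by linarith)
        _ = r := by ring
  have key2 : ∀ᵐ y ∂ν, ∀ q : ℚ, 0 < (q:ℝ) → ∀ d ∈ D,
      (y ∈ X ∩ ball d ((q:ℝ)/2) →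
        |finf y| ≤ essSup (fun z => |finf z|) (ν.restrict (X ∩ ball y (q:ℝ)))) := by
    rw [ae_all_iff]
    intro q
    by_cases hq : 0 < (q:ℝ)
    · have := (ae_ball_iff hDc).2 (fun d _ => key (q:ℝ) hq d)
      filter_upwards [this] with y hy _ d hd hyd
      exact hy d hd hyd
    · filter_upwards with y hq' d _ _
      exact absurd hq' hq
  filter_upwards [key2] with y hy hyX
  haveI : Nonempty (Set.Ioi (0:ℝ)) := ⟨⟨1, Set.mem_Ioi.2 one_pos⟩⟩
  refine le_ciInf ?_
  rintro ⟨ε, hε⟩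
  have hε' : (0:ℝ) < ε := hε
  obtain ⟨q, hq0, hqε⟩ := exists_rat_btwn hε'
  obtain ⟨d, hdD, hdist⟩ := hDd.exists_dist_lt y (show (0:ℝ) < (q:ℝ)/2 by linarith)
  have hyb : y ∈ X ∩ ball d ((q:ℝ)/2) := ⟨hyX, mem_ball.2 hdist⟩
  refine (hy q hq0 d hdD hyb).trans ?_
  have hpos : 0 < ν (X ∩ ball y (q:ℝ)) :=
    hνpos _ isOpen_ball ⟨y, hyX, mem_ball_self hq0⟩
  exact essSup_real_mono_measure
    (Measure.restrict_mono (Set.inter_subset_inter_right _ (ball_subset_ball hqε.le)) le_rfl)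
    (restrict_ne_zero' hpos) (fun z => abs_nonneg _) (ae_restrict_of_ae hC)


set_option maxHeartbeats 1000000 in
/-- **Pointwise bound on the concentration densities.**
Let `X ⊆ ℝⁿ` be compact and `ν` a finite Borel measure positive on nonempty relatively open
subsets of `X`. Suppose `f_k → f_∞` uniformly on `X` with `M := ‖f_∞‖_{L^∞(X,ν)} > 0`. Then
for every `ε ∈ (0, M)` there is `k(ε) ∈ ℕ` such that for all `k ≥ k(ε)`,
`|dν_k/dν (x)| ≤ (1/ν(X)) ((2 |f_∞|^★(x) + ε)/(2M − ε))^{k−1}` for `ν`-a.e. `x ∈ X`. -/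
theorem concDensity_pointwise_bound
    {n : ℕ} (X : Set (Euc n)) (hXc : IsCompact X) (hXm : MeasurableSet X)
    (ν : Measure (Euc n)) [IsFiniteMeasure ν] (hνX : ν Xᶜ = 0) (hν0 : 0 < ν X)
    (hνpos : ∀ V : Set (Euc n), IsOpen V → (X ∩ V).Nonempty → 0 < ν (X ∩ V))
    (f : ℕ → Euc n → ℝ) (hf : ∀ k, MemLp (f k) ⊤ ν)
    (finf : Euc n → ℝ) (hfinf : MemLp finf ⊤ ν)
    (hM : 0 < nLinfNorm ν X finf)
    (hconv : TendstoUniformlyOn f finf atTop X) :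
    ∀ ε : ℝ, 0 < ε → ε < nLinfNorm ν X finf →
      ∃ N : ℕ, ∀ k ≥ N,
        ∀ᵐ x ∂ν.restrict X,
          |concDensity k ν X (f k) x| ≤ (ν X).toReal⁻¹ *
            ((2 * essLimSup ν X (fun y => |finf y|) x + ε) /
              (2 * nLinfNorm ν X finf - ε)) ^ ((k : ℝ) - 1) := by
  intro ε hε0 hεM
  set M := nLinfNorm ν X finf with hMdef
  have hXae : ∀ᵐ x ∂ν, x ∈ X := by
    rw [ae_iff]
    exact hνX
  have hres : ν.restrict X = ν := Measure.restrict_eq_self_of_ae_mem hXae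
  have hν_ne : ν ≠ 0 := by
    intro hcon
    rw [hcon] at hν0
    simp at hν0
  haveI : NeBot (ae ν) := ae_neBot.2 hν_ne
  have hMS : M = essSup (fun x => |finf x|) ν := by rw [hMdef, nLinfNorm, hres]
  set C := (eLpNorm finf ⊤ ν).toReal with hCdef
  have hC : ∀ᵐ x ∂ν, |finf x| ≤ C := ae_abs_le_of_memLinf hfinf
  have hA := ae_le_essLimSup X hXm ν hνpos finf C hC
  -- positive measure superlevel set of |finf|
  set S := {x | M - ε/4 < |finf x|} with hSdef
  have hmS : 0 < ν S := by
    rcases eq_zero_or_pos (ν S) with h | h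
    · exfalso
      have hae : ∀ᵐ x ∂ν, |finf x| ≤ M - ε/4 := by
        rw [ae_iff]
        have : {x | ¬ |finf x| ≤ M - ε/4} = S := by
          ext x; simp [hSdef, not_le]
        rwa [this]
      have hle : essSup (fun x => |finf x|) ν ≤ M - ε/4 :=
        essSup_real_le_of_ae_le (fun x => abs_nonneg _) hae
      rw [← hMS] at hle
      linarith
    · exact h
  set mR := (ν S).toReal with hmRdef
  have hmRpos : 0 < mR := ENNReal.toReal_pos hmS.ne' (measure_ne_top ν S)
  set νXR := (ν X).toReal with hνXRdef
  have hνXRpos : 0 < νXR := ENNReal.toReal_pos hν0.ne' (measure_ne_top ν X)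
  set θ := M - 3*ε/8 with hθdef
  have hθpos : 0 < θ := by rw [hθdef]; linarith
  -- eventual facts about k
  have E1 : ∀ᶠ k in atTop, ∀ x ∈ X, dist (finf x) (f k x) < ε/8 :=
    Metric.tendstoUniformlyOn_iff.1 hconv (ε/8) (by linarith)
  have E2 : ∀ᶠ k : ℕ in atTop, ((k:ℝ))⁻¹ < ε/4 :=
    tendsto_inv_atTop_nhds_zero_nat.eventually_lt_const (by linarith)
  have E3 : ∀ᶠ k : ℕ in atTop, 0 < k := eventually_gt_atTop 0
  have E4 : ∀ᶠ k : ℕ in atTop, M - ε/2 < θ * (νXR⁻¹ * mR) ^ ((k:ℝ)⁻¹) := by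
    have hc : 0 < νXR⁻¹ * mR := by positivity
    have ht0 : Tendsto (fun k : ℕ => (νXR⁻¹ * mR) ^ ((k:ℝ)⁻¹)) atTop (𝓝 1) := by
      have heq : ∀ k : ℕ, (νXR⁻¹ * mR) ^ ((k:ℝ)⁻¹)
          = Real.exp (Real.log (νXR⁻¹ * mR) * (k:ℝ)⁻¹) :=
        fun k => Real.rpow_def_of_pos hc _
      have h2 : Tendsto (fun k : ℕ => Real.log (νXR⁻¹ * mR) * (k:ℝ)⁻¹) atTop (𝓝 0) := by
        simpa using tendsto_inv_atTop_nhds_zero_nat.const_mul (Real.log (νXR⁻¹ * mR))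
      have h3 : Tendsto (fun k : ℕ => Real.exp (Real.log (νXR⁻¹ * mR) * (k:ℝ)⁻¹)) atTop
          (𝓝 (Real.exp 0)) := (Real.continuous_exp.tendsto 0).comp h2
      rw [Real.exp_zero] at h3
      exact h3.congr fun k => (heq k).symm
    have ht : Tendsto (fun k : ℕ => θ * (νXR⁻¹ * mR) ^ ((k:ℝ)⁻¹)) atTop (𝓝 (θ * 1)) :=
      ht0.const_mul θ
    exact ht.eventually_const_lt (by rw [mul_one, hθdef]; linarith)
  obtain ⟨N, hN⟩ := eventually_atTop.1 (((E1.and E2).and E3).and E4)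
  refine ⟨N, fun k hk => ?_⟩
  obtain ⟨⟨⟨h1, h2⟩, h3⟩, h4⟩ := hN k hk
  have hk0 : k ≠ 0 := h3.ne'
  set g := fun y => regAbs k (f k y) with hgdef
  have hg0 : ∀ y, 0 ≤ g y := fun y => regAbs_nonneg _ _
  have hint_eq : (fun x => |g x| ^ (k:ℝ)) = fun x => g x ^ k := funext fun x => by
    rw [abs_of_nonneg (hg0 x), Real.rpow_natCast]
  set Ck := (eLpNorm (f k) ⊤ ν).toReal with hCkdef
  have hCk : ∀ᵐ x ∂ν, |f k x| ≤ Ck := ae_abs_le_of_memLinf (hf k)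
  have hg_aesm : AEStronglyMeasurable g ν := by
    have hcont : Continuous (fun a : ℝ => Real.sqrt (a ^ 2 + ((k:ℝ)⁻¹) ^ 2)) := by
      continuity
    exact hcont.comp_aestronglyMeasurable (hf k).1
  have hGk_aesm : AEStronglyMeasurable (fun x => g x ^ k) ν :=
    (continuous_pow k).comp_aestronglyMeasurable hg_aesm
  have hGk_int : Integrable (fun x => g x ^ k) ν := by
    refine ⟨hGk_aesm, HasFiniteIntegral.of_bounded (C := (Ck + 1) ^ k) ?_⟩
    filter_upwards [hCk] with x hx
    have hk1 : ((k:ℝ))⁻¹ ≤ 1 := by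
      have h1k : (1:ℝ) ≤ (k:ℝ) := by exact_mod_cast h3
      exact inv_le_one_of_one_le₀ h1k
    have hb : g x ≤ Ck + 1 := by
      have := regAbs_le k (f k x)
      simp only [hgdef]
      linarith
    rw [Real.norm_eq_abs, abs_of_nonneg (pow_nonneg (hg0 x) k)]
    exact pow_le_pow_left₀ (hg0 x) hb k
  -- Markov lower bound on the integral
  have hSsub : ∀ᵐ x ∂ν, x ∈ S → θ ^ k ≤ g x ^ k := by
    filter_upwards [hXae] with x hxX hxS
    have hd := h1 x hxX
    rw [Real.dist_eq] at hd
    have hxS' : M - ε/4 < |finf x| := hxS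
    have habs : |finf x| - |f k x| ≤ |finf x - f k x| := abs_sub_abs_le_abs_sub _ _
    have hfx : θ ≤ |f k x| := by rw [hθdef]; linarith
    have hgx : θ ≤ g x := hfx.trans (abs_le_regAbs k (f k x))
    exact pow_le_pow_left₀ hθpos.le hgx k
  have hmono : ν S ≤ ν {x | θ ^ k ≤ g x ^ k} := measure_mono_ae hSsub
  have hmark := mul_meas_ge_le_integral_of_nonneg
    (ae_of_all ν (fun x => pow_nonneg (hg0 x) k)) hGk_int (θ ^ k)
  have hIlow : θ ^ k * mR ≤ ∫ x, g x ^ k ∂ν := by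
    refine le_trans ?_ hmark
    have hmr := ENNReal.toReal_mono (measure_ne_top ν _) hmono
    have hθk : (0:ℝ) ≤ θ ^ k := pow_nonneg hθpos.le k
    exact mul_le_mul_of_nonneg_left hmr hθk
  -- lower bound for the normalized L^k norm
  have hQdef : nLkNorm k ν X g = (νXR⁻¹ * ∫ x, g x ^ k ∂ν) ^ ((k:ℝ)⁻¹) := by
    unfold nLkNorm
    rw [hres, hint_eq, ← hνXRdef]
  have hQlow : M - ε/2 ≤ nLkNorm k ν X g := by
    rw [hQdef]
    have hb : θ ^ k * (νXR⁻¹ * mR) ≤ νXR⁻¹ * ∫ x, g x ^ k ∂ν := by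
      have hmm := mul_le_mul_of_nonneg_left hIlow (inv_nonneg.2 hνXRpos.le)
      calc θ ^ k * (νXR⁻¹ * mR) = νXR⁻¹ * (θ ^ k * mR) := by ring
        _ ≤ νXR⁻¹ * ∫ x, g x ^ k ∂ν := hmm
    have hrp : (θ ^ k * (νXR⁻¹ * mR)) ^ ((k:ℝ)⁻¹)
        ≤ (νXR⁻¹ * ∫ x, g x ^ k ∂ν) ^ ((k:ℝ)⁻¹) := by
      apply Real.rpow_le_rpow ?_ hb (by positivity)
      have : (0:ℝ) ≤ θ ^ k := pow_nonneg hθpos.le k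
      positivity
    refine le_trans ?_ hrp
    have h2eq : (θ ^ k * (νXR⁻¹ * mR)) ^ ((k:ℝ)⁻¹)
        = θ * (νXR⁻¹ * mR) ^ ((k:ℝ)⁻¹) := by
      rw [Real.mul_rpow (pow_nonneg hθpos.le k) (by positivity)]
      congr 1
      rw [← Real.rpow_natCast θ k, ← Real.rpow_mul hθpos.le]
      rw [mul_inv_cancel₀ (Nat.cast_ne_zero.2 hk0), Real.rpow_one]
    rw [h2eq]
    exact h4.le
  have hQpos : 0 < nLkNorm k ν X g := lt_of_lt_of_le (by linarith) hQlow
  -- pointwise a.e. bound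
  rw [hres]
  filter_upwards [hXae, hA] with x hxX hAx
  set L := essLimSup ν X (fun y => |finf y|) x with hLdef
  have hL : |finf x| ≤ L := hAx hxX
  have hL0 : 0 ≤ L := (abs_nonneg _).trans hL
  have hd := h1 x hxX
  rw [Real.dist_eq] at hd
  have habs : |f k x| - |finf x| ≤ |f k x - finf x| := abs_sub_abs_le_abs_sub _ _
  have habs' : |f k x - finf x| = |finf x - f k x| := abs_sub_comm _ _
  have hR : regAbs k (f k x) ≤ L + ε/2 := by
    have hle := regAbs_le k (f k x)
    linarith
  simp only [concDensity]
  rw [← hνXRdef, ← hgdef]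
  set R := regAbs k (f k x) with hRdef
  set Q := nLkNorm k ν X g with hQd
  have hRpos : 0 < R := regAbs_pos hk0 _
  have habs2 : |νXR⁻¹ * (R ^ ((k:ℝ)-2) * f k x / Q ^ ((k:ℝ)-1))|
      = νXR⁻¹ * (R ^ ((k:ℝ)-2) * |f k x| / Q ^ ((k:ℝ)-1)) := by
    rw [abs_mul, abs_div, abs_mul, abs_of_nonneg (inv_nonneg.2 hνXRpos.le),
      abs_of_nonneg (Real.rpow_nonneg hRpos.le _),
      abs_of_pos (Real.rpow_pos_of_pos hQpos _)]
  rw [habs2]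
  refine mul_le_mul_of_nonneg_left ?_ (inv_nonneg.2 hνXRpos.le)
  have hnum : R ^ ((k:ℝ)-2) * |f k x| ≤ R ^ ((k:ℝ)-1) := by
    have h5 : |f k x| ≤ R := abs_le_regAbs k (f k x)
    calc R ^ ((k:ℝ)-2) * |f k x| ≤ R ^ ((k:ℝ)-2) * R :=
        mul_le_mul_of_nonneg_left h5 (Real.rpow_nonneg hRpos.le _)
      _ = R ^ ((k:ℝ)-1) := by
        rw [show (k:ℝ)-1 = ((k:ℝ)-2)+1 by ring, Real.rpow_add hRpos, Real.rpow_one]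
  have step0 : R ^ ((k:ℝ)-2) * |f k x| / Q ^ ((k:ℝ)-1) ≤ (R/Q) ^ ((k:ℝ)-1) := by
    rw [Real.div_rpow hRpos.le hQpos.le]
    exact (div_le_div_iff_of_pos_right (Real.rpow_pos_of_pos hQpos _)).2 hnum
  have step2 : (R/Q) ^ ((k:ℝ)-1) ≤ ((L + ε/2)/(M - ε/2)) ^ ((k:ℝ)-1) := by
    apply Real.rpow_le_rpow (div_nonneg hRpos.le hQpos.le) ?_ ?_
    · exact div_le_div₀ (by linarith) hR (by linarith) hQlow
    · have h1k : (1:ℝ) ≤ (k:ℝ) := by exact_mod_cast h3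
      linarith
  have heqfrac : (L + ε/2)/(M - ε/2) = (2*L+ε)/(2*M-ε) := by
    rw [div_eq_div_iff (by linarith) (by linarith)]
    ring
  rw [← heqfrac]
  exact step0.trans step2


end
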